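/- Let T = (W,D,R,δ,ρ) be a tree-shaped increasing domain model rooted at r, let d ∉ D and c ∈ δ(r), and let T_{d↦c} be the model obtained by adding d to every local domain while making d mimic c (as defined in the context). Then for every assignment σ, every FOML formula φ, and every world w ∈ W: T,w,σ[x↦c] ⊨ φ iff T_{d↦c},w,σ[x↦c] ⊨ φ iff T_{d↦c},w,σ[x↦d] ⊨ φ. -/

import Mathlib

set_option maxHeartbeats 1000000

/-! ## Syntax of first-order modal logic (FOML)

Predicate symbols and variables are represented by natural numbers; an atom
`atom p args` applies the predicate symbol `p` to the list of variables `args`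
(the arity of `p` in this occurrence is the length of `args`). -/
inductive Formula : Type where
  | atom (p : ℕ) (args : List ℕ)
  | neg  (φ : Formula)
  | and  (φ ψ : Formula)
  | or   (φ ψ : Formula)
  | box  (φ : Formula)
  | dia  (φ : Formula)
  | ex   (x : ℕ) (φ : Formula)
  | all  (x : ℕ) (φ : Formula)
deriving DecidableEq

namespace Formula

def imp (φ ψ : Formula) : Formula := .or φ.neg ψ
def biimp (φ ψ : Formula) : Formula := .and (imp φ ψ) (imp ψ φ)
/-- a fixed tautology `⊤` -/
def top : Formula := .or (.atom 0 []) (.neg (.atom 0 []))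
/-- a fixed contradiction `⊥` -/
def bot : Formula := .and (.atom 0 []) (.neg (.atom 0 []))

end Formula

def bigAnd (l : List Formula) : Formula := l.foldr Formula.and Formula.top
def bigOr  (l : List Formula) : Formula := l.foldr Formula.or Formula.bot

/-! ## Semantics: Kripke structures with world-relative domains -/

structure Model where
  W : Type
  D : Type
  R : W → W → Prop
  dom : W → Set D
  ρ : W → ℕ → Set (List D)

/-- `M` is an increasing domain model: nonempty countable set of worlds, nonempty
countable domain, nonempty local domains that increase along the accessibility
relation, and interpretations of predicates at a world take values in the local
domain of that world. -/
def Model.Increasing (M : Model) : Prop :=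
  Nonempty M.W ∧ Nonempty M.D ∧ Countable M.W ∧ Countable M.D ∧
    (∀ w, (M.dom w).Nonempty) ∧
    (∀ w v, M.R w v → M.dom w ⊆ M.dom v) ∧
    (∀ w p l, l ∈ M.ρ w p → ∀ d ∈ l, d ∈ M.dom w)

def Model.sat (M : Model) : M.W → (ℕ → M.D) → Formula → Prop
  | w, σ, .atom p args => args.map σ ∈ M.ρ w p
  | w, σ, .neg φ => ¬ M.sat w σ φ
  | w, σ, .and φ ψ => M.sat w σ φ ∧ M.sat w σ ψ
  | w, σ, .or φ ψ => M.sat w σ φ ∨ M.sat w σ ψ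
  | w, σ, .box φ => ∀ v, M.R w v → M.sat v σ φ
  | w, σ, .dia φ => ∃ v, M.R w v ∧ M.sat v σ φ
  | w, σ, .ex x φ => ∃ d ∈ M.dom w, M.sat w (Function.update σ x d) φ
  | w, σ, .all x φ => ∀ d ∈ M.dom w, M.sat w (Function.update σ x d) φ

/-- the assignment `σ` is relevant at the world `w` -/
def Model.relevant (M : Model) (w : M.W) (σ : ℕ → M.D) : Prop := ∀ x, σ x ∈ M.dom w

/-- satisfiability over increasing domain models -/
def Satisfiable (φ : Formula) : Prop :=
  ∃ (M : Model), M.Increasing ∧ ∃ (w : M.W) (σ : ℕ → M.D), M.relevant w σ ∧ M.sat w σ φ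

/-- `M` is a tree model rooted at `r`: every world is reachable from `r`, the
root has no predecessor, every world has at most one predecessor, and there
are no cycles. -/
def IsTreeRootedAt (M : Model) (r : M.W) : Prop :=
  (∀ w, Relation.ReflTransGen M.R r w) ∧
    (∀ w, ¬ M.R w r) ∧
    (∀ w v v', M.R v w → M.R v' w → v = v') ∧
    (∀ w, ¬ Relation.TransGen M.R w w)

/-- `addMimic M c` is the model `T_{d↦c}` obtained from `M` by adding one fresh
element `d` (represented by `none : Option M.D`) to every local domain, where
`d` mimics `c`: the valuation of a predicate consists of all tuples obtained
from a tuple of the old valuation by replacing zero or more occurrences of `c`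
by `d`. -/
def addMimic (M : Model) (c : M.D) : Model where
  W := M.W
  D := Option M.D
  R := M.R
  dom w := insert none (Option.some '' M.dom w)
  ρ w p :=
    { l | ∃ l₀ ∈ M.ρ w p,
        List.Forall₂ (fun e' e => e' = some e ∨ (e = c ∧ e' = none)) l l₀ }

/-! Collapsing the fresh element onto `c`, i.e. the map `e ↦ e.getD c`, transports truth from
`T_{d↦c}` back to `T`: the new valuation is exactly the preimage of the old one under this map,
and quantifying over a new local domain through it is quantifying over the old one as long as
`c` lies in it, which holds everywhere since domains grow along `R` from the root. Both
`σ[x↦c]` and `σ[x↦d]` collapse to `σ[x↦c]`. -/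

theorem Model.dom_subset_of_reflTransGen {M : Model}
    (hmono : ∀ w v, M.R w v → M.dom w ⊆ M.dom v) {u w : M.W}
    (h : Relation.ReflTransGen M.R u w) : M.dom u ⊆ M.dom w := by
  induction h with
  | refl => exact subset_rfl
  | tail _ hstep ih => exact ih.trans (hmono _ _ hstep)

section getD

variable {α : Type*} {s : Set α} {c : α} {p : α → Prop}

theorem Set.exists_mem_insert_none_image_some_getD (hc : c ∈ s) :
    (∃ e ∈ insert none (Option.some '' s), p (e.getD c)) ↔ ∃ a ∈ s, p a := by
  simpa using fun hpc => ⟨c, hc, hpc⟩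

theorem Set.forall_mem_insert_none_image_some_getD (hc : c ∈ s) :
    (∀ e ∈ insert none (Option.some '' s), p (e.getD c)) ↔ ∀ a ∈ s, p a := by
  simpa using fun h => h c hc

end getD

section addMimic

variable {M : Model} {c : M.D}

theorem mem_addMimic_ρ {w : M.W} {p : ℕ} {l : List (Option M.D)} :
    l ∈ (addMimic M c).ρ w p ↔ l.map (Option.getD · c) ∈ M.ρ w p := by
  have hrel : (fun (e' : Option M.D) e => e' = some e ∨ (e = c ∧ e' = none)) =
      fun e' e => e'.getD c = e := by
    ext e' e
    cases e' <;> simp [eq_comm]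
  change (∃ l₀ ∈ M.ρ w p, List.Forall₂ _ l l₀) ↔ _
  simp only [hrel, ← List.forall₂_map_left_iff, List.forall₂_eq_eq_eq, exists_eq_right']

theorem sat_addMimic_iff (hc : ∀ w, c ∈ M.dom w) (φ : Formula) (w : M.W)
    (τ : ℕ → Option M.D) :
    (addMimic M c).sat w τ φ ↔ M.sat w ((Option.getD · c) ∘ τ) φ := by
  induction φ generalizing w τ with
  | atom p args =>
    show args.map τ ∈ (addMimic M c).ρ w p ↔ args.map _ ∈ M.ρ w p
    rw [mem_addMimic_ρ, List.map_map]
  | neg φ ih => exact not_congr (ih w τ)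
  | and φ ψ ih₁ ih₂ => exact and_congr (ih₁ w τ) (ih₂ w τ)
  | or φ ψ ih₁ ih₂ => exact or_congr (ih₁ w τ) (ih₂ w τ)
  | box φ ih => exact forall₂_congr fun v _ => ih v τ
  | dia φ ih => exact exists_congr fun v => and_congr_right' (ih v τ)
  | ex y φ ih =>
    simp only [Model.sat]
    refine (exists_congr fun e => and_congr_right' ?_).trans
      (Set.exists_mem_insert_none_image_some_getD (p := fun a =>
        M.sat w (Function.update ((Option.getD · c) ∘ τ) y a) φ) (hc w))
    exact (ih w _).trans (Iff.of_eq (congrArg (M.sat w · φ) (Function.comp_update _ _ _ _)))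
  | all y φ ih =>
    simp only [Model.sat]
    refine (forall₂_congr fun e _ => ?_).trans
      (Set.forall_mem_insert_none_image_some_getD (p := fun a =>
        M.sat w (Function.update ((Option.getD · c) ∘ τ) y a) φ) (hc w))
    exact (ih w _).trans (Iff.of_eq (congrArg (M.sat w · φ) (Function.comp_update _ _ _ _)))

end addMimic

/-- Let `T` be a tree-shaped increasing domain model rooted at
`r`, let `c ∈ δ(r)`, and let `T_{d↦c}` be obtained by adding the fresh element
`d` mimicking `c`.  Then for every assignment `σ`, every FOML formula `φ` and
every world `w`:
`T,w,σ[x↦c] ⊨ φ`  iff  `T_{d↦c},w,σ[x↦c] ⊨ φ`  iff  `T_{d↦c},w,σ[x↦d] ⊨ φ`. -/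
theorem addMimic_preserves_truth (M : Model) (hM : M.Increasing) (r : M.W)
    (htree : IsTreeRootedAt M r) (c : M.D) (hc : c ∈ M.dom r)
    (w : M.W) (σ : ℕ → M.D) (x : ℕ) (φ : Formula) :
    (M.sat w (Function.update σ x c) φ ↔
      (addMimic M c).sat w (Function.update (fun v => some (σ v)) x (some c)) φ) ∧
    ((addMimic M c).sat w (Function.update (fun v => some (σ v)) x (some c)) φ ↔
      (addMimic M c).sat w (Function.update (fun v => some (σ v)) x none) φ) := by
  have hc_everywhere : ∀ v, c ∈ M.dom v := fun v =>
    Model.dom_subset_of_reflTransGen hM.2.2.2.2.2.1 (htree.1 v) hc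
  have hcollapse : ∀ e : Option M.D,
      (Option.getD · c) ∘ Function.update (fun v => some (σ v)) x e =
        Function.update σ x (e.getD c) :=
    fun e => Function.comp_update _ _ _ _
  have hsome := sat_addMimic_iff hc_everywhere φ w
    (Function.update (fun v => some (σ v)) x (some c))
  have hnone := sat_addMimic_iff hc_everywhere φ w (Function.update (fun v => some (σ v)) x none)
  rw [hcollapse] at hsome hnone
  exact ⟨hsome.symm, hsome.trans hnone.symm⟩
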